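/- Antisymmetry of the form ε₊ on homology: let E be a finite set, σ₀, σ₁ permutations of E, m a perfect matching, ρ_{m,c} = (I − ς_{m,c})^{-1}, and let H₁ ⊆ ℤ^E be the subgroup generated by all differences m' − m'' of perfect matchings. Then for all h₁, h₂ ∈ H₁ one has h₁ᵀ (ρ_{m,0} + ρ_{m,1} − I) h₂ = − h₂ᵀ (ρ_{m,0} + ρ_{m,1} − I) h₁. -/

import Mathlib

open Finset Matrix

variable {E : Type*}

/-- A perfect matching of `(E, σ₀, σ₁)`: a `{0,1}`-valued function on `E` such that every
cycle (orbit) of `σ₀` and every cycle of `σ₁` contains exactly one element with value `1`. -/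
def IsPerfectMatching (σ₀ σ₁ : Equiv.Perm E) (m : E → ℤ) : Prop :=
  (∀ e, m e = 0 ∨ m e = 1) ∧
  (∀ e, ∃! e', σ₀.SameCycle e e' ∧ m e' = 1) ∧
  (∀ e, ∃! e', σ₁.SameCycle e e' ∧ m e' = 1)

/-- The "broken" permutation matrix `ς_{m,σ}`: the matrix of the permutation `σ`
(with `(σ e, e)`-entry `1`) in which every column `e` with `m e = 1` is replaced by zero. -/
def brokenPermMatrix [DecidableEq E] (σ : Equiv.Perm E) (m : E → ℤ) : Matrix E E ℤ :=
  Matrix.of fun e' e => if e' = σ e ∧ m e = 0 then 1 else 0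

/-- The matrix `ρ_{m,σ} = (I - ς_{m,σ})⁻¹`. -/
noncomputable def rhoMatrix [Fintype E] [DecidableEq E] (σ : Equiv.Perm E) (m : E → ℤ) :
    Matrix E E ℤ :=
  (1 - brokenPermMatrix σ m)⁻¹

/-- The subgroup `H₁ ⊆ ℤ^E` generated by all differences of perfect matchings. -/
def matchingHomology (σ₀ σ₁ : Equiv.Perm E) : AddSubgroup (E → ℤ) :=
  AddSubgroup.closure
    {x | ∃ m' m'', IsPerfectMatching σ₀ σ₁ m' ∧ IsPerfectMatching σ₀ σ₁ m'' ∧ x = m' - m''}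

/-! The symmetric part of `ρ = (I - ς)⁻¹` is `ρ + ρᵀ - I = ρᵀ (I - ςᵀ ς) ρ`, and for a perfect
matching `m` the matrix `I - ςᵀ ς` is the diagonal matrix `diag m`. Row `f` of `ρ` at a matched
element `f` is the indicator of the cycle of `f`, and every perfect matching has exactly one element
on that cycle, so `diag m · ρ` kills every difference of perfect matchings. Hence the symmetric part
of `ρ_{m,0} + ρ_{m,1} - I`, the sum of those of `ρ_{m,0}` and `ρ_{m,1}`, vanishes on `H₁`. -/

open Equiv

lemma Matrix.dotProduct_mulVec_eq_neg_of_add_transpose_mulVec_eq_zero {n R : Type*} [Fintype n]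
    [CommRing R] (A : Matrix n n R) (x y : n → R) (h : (A + Aᵀ) *ᵥ y = 0) :
    x ⬝ᵥ A *ᵥ y = -(y ⬝ᵥ A *ᵥ x) := by
  rw [← dotProduct_transpose_mulVec A x y, eq_neg_iff_add_eq_zero, ← dotProduct_add,
    ← add_mulVec, h, dotProduct_zero]

def IsCycleTransversal (σ : Perm E) (m : E → ℤ) : Prop :=
  ∀ e, ∃! e', σ.SameCycle e e' ∧ m e' = 1

lemma IsPerfectMatching.symm {σ₀ σ₁ : Perm E} {m : E → ℤ} (hm : IsPerfectMatching σ₀ σ₁ m) :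
    IsPerfectMatching σ₁ σ₀ m :=
  ⟨hm.1, hm.2.2, hm.2.1⟩

lemma matchingHomology_comm (σ₀ σ₁ : Perm E) : matchingHomology σ₀ σ₁ = matchingHomology σ₁ σ₀ := by
  have key : ∀ τ₀ τ₁ : Perm E, matchingHomology τ₀ τ₁ ≤ matchingHomology τ₁ τ₀ := fun τ₀ τ₁ =>
    AddSubgroup.closure_mono fun _ ⟨m', m'', hm', hm'', hx⟩ => ⟨m', m'', hm'.symm, hm''.symm, hx⟩
  exact le_antisymm (key σ₀ σ₁) (key σ₁ σ₀)

section

variable [Fintype E] [DecidableEq E]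

def cycleIndicator (σ : Perm E) (f : E) : E → ℤ :=
  fun e => if σ.SameCycle f e then 1 else 0

def cycleSumKer (σ : Perm E) : AddSubgroup (E → ℤ) where
  carrier := {x | ∀ f, cycleIndicator σ f ⬝ᵥ x = 0}
  add_mem' hx hy f := by rw [dotProduct_add, hx f, hy f, add_zero]
  zero_mem' f := dotProduct_zero _
  neg_mem' hx f := by rw [dotProduct_neg, hx f, neg_zero]

variable {σ : Perm E} {m : E → ℤ}

lemma vecMul_brokenPermMatrix_apply (v : E → ℤ) (e : E) :
    (v ᵥ* brokenPermMatrix σ m) e = if m e = 0 then v (σ e) else 0 := by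
  split_ifs with h <;> simp [vecMul, dotProduct, brokenPermMatrix, h]

lemma brokenPermMatrix_pow_apply (k : ℕ) (e' e : E) :
    (brokenPermMatrix σ m ^ k) e' e =
      if e' = (σ ^ k) e ∧ ∀ j < k, m ((σ ^ j) e) = 0 then 1 else 0 := by
  induction k generalizing e with
  | zero => simp [one_apply]
  | succ k ih =>
    rw [pow_succ, mul_apply_eq_vecMul, vecMul_brokenPermMatrix_apply, ih]
    simp only [Nat.forall_lt_succ_left, pow_succ, Perm.mul_apply, pow_zero, Perm.one_apply]
    split_ifs <;> tauto

lemma isNilpotent_brokenPermMatrix (hm : IsCycleTransversal σ m) :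
    IsNilpotent (brokenPermMatrix σ m) := by
  refine ⟨orderOf σ, ext fun e' e => ?_⟩
  rw [brokenPermMatrix_pow_apply, Matrix.zero_apply, ite_eq_right_iff]
  rintro ⟨-, hunmatched⟩
  obtain ⟨f, ⟨hef, hf⟩, -⟩ := hm e
  obtain ⟨i, hi, rfl⟩ := hef.exists_pow_eq'
  exact absurd (hunmatched i hi) (by rw [hf]; exact one_ne_zero)

lemma isUnit_det_one_sub_brokenPermMatrix (hm : IsCycleTransversal σ m) :
    IsUnit (1 - brokenPermMatrix σ m).det :=
  (isUnit_iff_isUnit_det _).mp (isNilpotent_brokenPermMatrix hm).isUnit_one_sub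

lemma one_sub_brokenPermMatrix_mul_rhoMatrix (hm : IsCycleTransversal σ m) :
    (1 - brokenPermMatrix σ m) * rhoMatrix σ m = 1 :=
  mul_nonsing_inv _ (isUnit_det_one_sub_brokenPermMatrix hm)

lemma cycleIndicator_vecMul_one_sub_brokenPermMatrix (hm01 : ∀ e, m e = 0 ∨ m e = 1)
    (hm : IsCycleTransversal σ m) {f : E} (hf : m f = 1) :
    cycleIndicator σ f ᵥ* (1 - brokenPermMatrix σ m) = Pi.single f 1 := by
  funext a
  rw [vecMul_sub, vecMul_one, Pi.sub_apply, vecMul_brokenPermMatrix_apply]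
  simp only [cycleIndicator, Perm.sameCycle_apply_right]
  by_cases hfa : σ.SameCycle f a
  · by_cases haf : a = f
    · subst haf
      simp [hf, hfa]
    · have ha : m a = 0 :=
        (hm01 a).resolve_right fun ha => haf ((hm f).unique ⟨hfa, ha⟩ ⟨.refl σ f, hf⟩)
      simp [hfa, ha, haf]
  · have haf : a ≠ f := by rintro rfl; exact hfa (.refl σ a)
    simp [hfa, haf]

lemma rhoMatrix_row_eq_cycleIndicator (hm01 : ∀ e, m e = 0 ∨ m e = 1)
    (hm : IsCycleTransversal σ m) {f : E} (hf : m f = 1) :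
    rhoMatrix σ m f = cycleIndicator σ f :=
  calc rhoMatrix σ m f = Pi.single f 1 ᵥ* rhoMatrix σ m := by rw [single_vecMul, one_smul]; rfl
    _ = cycleIndicator σ f ᵥ* ((1 - brokenPermMatrix σ m) * rhoMatrix σ m) := by
      rw [← vecMul_vecMul, cycleIndicator_vecMul_one_sub_brokenPermMatrix hm01 hm hf]
    _ = cycleIndicator σ f := by rw [one_sub_brokenPermMatrix_mul_rhoMatrix hm, vecMul_one]

lemma cycleIndicator_dotProduct_eq_one (hm01 : ∀ e, m e = 0 ∨ m e = 1)
    (hm : IsCycleTransversal σ m) (f : E) : cycleIndicator σ f ⬝ᵥ m = 1 := by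
  obtain ⟨e₀, ⟨hfe₀, he₀⟩, hunique⟩ := hm f
  rw [dotProduct, Finset.sum_eq_single e₀ _ (by simp)]
  · simp [cycleIndicator, hfe₀, he₀]
  · intro e _ he
    rcases hm01 e with h | h
    · simp [h]
    · have hfe : ¬σ.SameCycle f e := fun hfe => he (hunique e ⟨hfe, h⟩)
      simp [cycleIndicator, hfe]

lemma matchingHomology_le_cycleSumKer (σ₀ σ₁ : Perm E) :
    matchingHomology σ₀ σ₁ ≤ cycleSumKer σ₀ := by
  refine (AddSubgroup.closure_le _).mpr ?_
  rintro _ ⟨m', m'', hm', hm'', rfl⟩ f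
  rw [dotProduct_sub, cycleIndicator_dotProduct_eq_one hm'.1 hm'.2.1,
    cycleIndicator_dotProduct_eq_one hm''.1 hm''.2.1, sub_self]

lemma diagonal_mul_rhoMatrix_mulVec_eq_zero (hm01 : ∀ e, m e = 0 ∨ m e = 1)
    (hm : IsCycleTransversal σ m) {x : E → ℤ} (hx : x ∈ cycleSumKer σ) :
    (diagonal m * rhoMatrix σ m) *ᵥ x = 0 := by
  funext a
  rw [← mulVec_mulVec, mulVec_diagonal]
  rcases hm01 a with ha | ha
  · rw [ha, zero_mul, Pi.zero_apply]
  · rw [ha, one_mul]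
    exact (congrArg (· ⬝ᵥ x) (rhoMatrix_row_eq_cycleIndicator hm01 hm ha)).trans (hx a)

lemma transpose_brokenPermMatrix_mul_self (hm01 : ∀ e, m e = 0 ∨ m e = 1) :
    (brokenPermMatrix σ m)ᵀ * brokenPermMatrix σ m = 1 - diagonal m := by
  ext a b
  rw [mul_apply_eq_vecMul, vecMul_brokenPermMatrix_apply]
  by_cases hab : a = b
  · subst hab
    rcases hm01 a with h | h <;> simp [brokenPermMatrix, h]
  · simp [brokenPermMatrix, σ.injective.eq_iff, Ne.symm hab, hab]

lemma rhoMatrix_add_transpose_sub_one (hm01 : ∀ e, m e = 0 ∨ m e = 1)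
    (hm : IsCycleTransversal σ m) :
    rhoMatrix σ m + (rhoMatrix σ m)ᵀ - 1 =
      (rhoMatrix σ m)ᵀ * (diagonal m * rhoMatrix σ m) := by
  set ς := brokenPermMatrix σ m
  set ρ := rhoMatrix σ m
  have hρ : (1 - ς) * ρ = 1 := one_sub_brokenPermMatrix_mul_rhoMatrix hm
  have hρT : ρᵀ * (1 - ς)ᵀ = 1 := by rw [← transpose_mul, hρ, transpose_one]
  have hmiddle : (1 - ς)ᵀ + (1 - ς) - (1 - ς)ᵀ * (1 - ς) = diagonal m := by
    rw [transpose_sub, transpose_one]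
    have : (1 - ςᵀ) + (1 - ς) - (1 - ςᵀ) * (1 - ς) = 1 - ςᵀ * ς := by noncomm_ring
    rw [this, transpose_brokenPermMatrix_mul_self hm01, sub_sub_cancel]
  calc ρ + ρᵀ - 1
      = ρᵀ * (1 - ς)ᵀ * ρ + ρᵀ * ((1 - ς) * ρ) - ρᵀ * (1 - ς)ᵀ * ((1 - ς) * ρ) := by
        rw [hρT, hρ, one_mul, mul_one, mul_one]
    _ = ρᵀ * (((1 - ς)ᵀ + (1 - ς) - (1 - ς)ᵀ * (1 - ς)) * ρ) := by noncomm_ring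
    _ = ρᵀ * (diagonal m * ρ) := by rw [hmiddle]

lemma rhoMatrix_add_transpose_sub_one_mulVec_eq_zero (hm01 : ∀ e, m e = 0 ∨ m e = 1)
    (hm : IsCycleTransversal σ m) {x : E → ℤ} (hx : x ∈ cycleSumKer σ) :
    (rhoMatrix σ m + (rhoMatrix σ m)ᵀ - 1) *ᵥ x = 0 := by
  rw [rhoMatrix_add_transpose_sub_one hm01 hm, ← mulVec_mulVec,
    diagonal_mul_rhoMatrix_mulVec_eq_zero hm01 hm hx, mulVec_zero]

end

theorem epsPlus_antisymm_general [Fintype E] [DecidableEq E]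
    (σ₀ σ₁ : Equiv.Perm E) (m : E → ℤ) (hm : IsPerfectMatching σ₀ σ₁ m)
    (h₁ h₂ : E → ℤ)
    (hh₂ : h₂ ∈ matchingHomology σ₀ σ₁) :
    h₁ ⬝ᵥ (rhoMatrix σ₀ m + rhoMatrix σ₁ m - 1).mulVec h₂ =
      -(h₂ ⬝ᵥ (rhoMatrix σ₀ m + rhoMatrix σ₁ m - 1).mulVec h₁) := by
  obtain ⟨hm01, hm₀, hm₁⟩ := hm
  have hsym₀ := rhoMatrix_add_transpose_sub_one_mulVec_eq_zero hm01 hm₀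
    (matchingHomology_le_cycleSumKer σ₀ σ₁ hh₂)
  have hsym₁ := rhoMatrix_add_transpose_sub_one_mulVec_eq_zero hm01 hm₁
    (matchingHomology_le_cycleSumKer σ₁ σ₀ (matchingHomology_comm σ₀ σ₁ ▸ hh₂))
  refine dotProduct_mulVec_eq_neg_of_add_transpose_mulVec_eq_zero _ _ _ ?_
  calc _ = (rhoMatrix σ₀ m + (rhoMatrix σ₀ m)ᵀ - 1) *ᵥ h₂
        + (rhoMatrix σ₁ m + (rhoMatrix σ₁ m)ᵀ - 1) *ᵥ h₂ := by
        rw [← add_mulVec, transpose_sub, transpose_add, transpose_one]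
        congr 1
        abel
    _ = 0 := by rw [hsym₀, hsym₁, add_zero]

/-- Antisymmetry of the form `ε₊` given by `ρ_{m,0} + ρ_{m,1} - I` on the subgroup `H₁`
generated by differences of perfect matchings. -/
theorem epsPlus_antisymm [Fintype E] [DecidableEq E]
    (σ₀ σ₁ : Equiv.Perm E) (m : E → ℤ) (hm : IsPerfectMatching σ₀ σ₁ m)
    (h₁ h₂ : E → ℤ)
    (hh₁ : h₁ ∈ matchingHomology σ₀ σ₁) (hh₂ : h₂ ∈ matchingHomology σ₀ σ₁) :
    h₁ ⬝ᵥ (rhoMatrix σ₀ m + rhoMatrix σ₁ m - 1).mulVec h₂ =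
      -(h₂ ⬝ᵥ (rhoMatrix σ₀ m + rhoMatrix σ₁ m - 1).mulVec h₁) :=
  epsPlus_antisymm_general σ₀ σ₁ m hm h₁ h₂ hh₂
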